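/- arXiv:1612.05514 — 5 statements merged into one kernel-verified Lean document; each statement's English description precedes it below -/
import Mathlib

section
/- Let M ⊆ ℤ be a Maya diagram, B = {(i_n, j_n)}_{n∈ℤ} its bent diagram, λ the partition associated to M, F the Ferrer's diagram of λ, and F' the rim of F. Then F' = {(i_n, j_n) : n ∈ ℤ} ∩ (ℕ×ℕ), i.e. the rim of F consists exactly of those points of the bent diagram both of whose coordinates are positive. -/
/-- A Maya diagram: a set of integers containing only finitely many non-negative
integers and excluding only finitely many negative integers. -/
def IsMaya (M : Set ℤ) : Prop :=
  {m : ℤ | m ∈ M ∧ 0 ≤ m}.Finite ∧ {m : ℤ | m < 0 ∧ m ∉ M}.Finite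

/-- The shifted Maya diagram `M - k = {m - k : m ∈ M}`. -/
def shiftM (M : Set ℤ) (k : ℤ) : Set ℤ := {m : ℤ | m + k ∈ M}

/-- `M₊`, viewed as a subset of ℕ. -/
def MayaPlus (M : Set ℤ) : Set ℕ := {a : ℕ | (a : ℤ) ∈ M}

/-- `M₋ = {-m-1 : m < 0, m ∉ M}`, viewed as a subset of ℕ. -/
def MayaMinus (M : Set ℤ) : Set ℕ := {a : ℕ | (-(a : ℤ) - 1) ∉ M}

/-- The girth `|M| = #M₋ + #M₊`. -/
noncomputable def girth (M : Set ℤ) : ℕ := (MayaMinus M).ncard + (MayaPlus M).ncard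

/-- Physicists' Hermite polynomial `H_n(x) = (-1)^n e^{x²} Dⁿ e^{-x²}`, as a real function. -/
noncomputable def physHermite (n : ℕ) : ℝ → ℝ :=
  fun x => (-1 : ℝ) ^ n * Real.exp (x ^ 2) * iteratedDeriv n (fun y => Real.exp (-y ^ 2)) x

/-- The complex Hermite function `(-1)^n e^{z²} Dⁿ e^{-z²}`. -/
noncomputable def hermiteC (n : ℕ) : ℂ → ℂ :=
  fun z => (-1 : ℂ) ^ n * Complex.exp (z ^ 2) * iteratedDeriv n (fun w => Complex.exp (-w ^ 2)) z

/-- Conjugate Hermite polynomial `θ_n(x) = i^{-n} H_n(i x)`, as a real function. -/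
noncomputable def conjHermite (n : ℕ) : ℝ → ℝ :=
  fun x => (Complex.I ^ (-(n : ℤ)) * hermiteC n (Complex.I * x)).re

/-- The Hermite pseudo-Wronskian of a Maya diagram with Frobenius symbol
`(s₁,…,s_p | t₁,…,t_q)`:
`H_M(x) = e^{-p x²} · Wr[e^{x²}θ_{s₁}, …, e^{x²}θ_{s_p}, H_{t_q}, …, H_{t₁}](x)`.
Here `s i` is `s_{i+1}` and `t j` is `t_{j+1}` (0-based indexing). -/
noncomputable def pW (p q : ℕ) (s : Fin p → ℕ) (t : Fin q → ℕ) (x : ℝ) : ℝ :=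
  Real.exp (-(p : ℝ) * x ^ 2) *
    Matrix.det (Matrix.of fun i k : Fin (p + q) =>
      iteratedDeriv (k : ℕ)
        (fun y => if h : (i : ℕ) < p then Real.exp (y ^ 2) * conjHermite (s ⟨i, h⟩) y
          else physHermite (t ⟨p + q - 1 - (i : ℕ), by have := i.isLt; omega⟩) y) x)

/-- `(s₁,…,s_p | t₁,…,t_q)` is the Frobenius symbol of `M`. -/
def IsFrobenius {p q : ℕ} (M : Set ℤ) (s : Fin p → ℕ) (t : Fin q → ℕ) : Prop :=
  StrictAnti s ∧ StrictAnti t ∧ Set.range s = MayaMinus M ∧ Set.range t = MayaPlus M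

/-- `i_n = #{m ∉ M : m < n}`. -/
noncomputable def iN (M : Set ℤ) (n : ℤ) : ℕ := {m : ℤ | m ∉ M ∧ m < n}.ncard

/-- `j_n = #{m ∈ M : m ≥ n}`. -/
noncomputable def jN (M : Set ℤ) (n : ℤ) : ℕ := {m : ℤ | m ∈ M ∧ n ≤ m}.ncard

/-- `M` is in standard form. -/
def IsStandard (M : Set ℤ) : Prop := 0 ∉ M ∧ ∀ m : ℤ, m < 0 → m ∈ M

/-!
A point `(i, j)` with `i, j ≥ 1` lies on the rim exactly when `λ_{j+1} ≤ i ≤ λ_j`. On the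
bent diagram, `j_n = j` exactly for `m_{j+1} < n ≤ m_j`, and on this interval `i_n` climbs
from `i_{m_{j+1}+1} = λ_{j+1}` to `i_{m_j} = λ_j` in steps of at most one, so it takes every
value in between.
-/

theorem Int.exists_mem_Icc_eq_of_le_add_one {f : ℤ → ℕ} (hf : ∀ n, f (n + 1) ≤ f n + 1)
    {a b : ℤ} (hab : a ≤ b) {i : ℕ} (ha : f a ≤ i) (hb : i ≤ f b) :
    ∃ n ∈ Set.Icc a b, f n = i := by
  induction b, hab using Int.leInduction with
  | base => exact ⟨a, Set.left_mem_Icc.2 le_rfl, le_antisymm ha hb⟩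
  | succ b hab ih =>
    rcases le_or_gt i (f b) with hi | hi
    · obtain ⟨n, ⟨han, hnb⟩, hn⟩ := ih hi
      exact ⟨n, ⟨han, hnb.trans (Int.le_add_one le_rfl)⟩, hn⟩
    · exact ⟨b + 1, ⟨Int.le_add_one hab, le_rfl⟩, by have := hf b; omega⟩

section Maya

variable {M : Set ℤ}

theorem IsMaya.finite_notMem_lt (hM : IsMaya M) (n : ℤ) : {x : ℤ | x ∉ M ∧ x < n}.Finite :=
  (hM.2.union (Set.finite_Ico 0 n)).subset fun x ⟨hxM, hxn⟩ => by
    rcases lt_or_ge x 0 with hx | hx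
    · exact Or.inl ⟨hx, hxM⟩
    · exact Or.inr ⟨hx, hxn⟩

theorem IsMaya.finite_mem_ge (hM : IsMaya M) (n : ℤ) : {x : ℤ | x ∈ M ∧ n ≤ x}.Finite :=
  (hM.1.union (Set.finite_Ico n 0)).subset fun x ⟨hxM, hnx⟩ => by
    rcases le_or_gt 0 x with hx | hx
    · exact Or.inl ⟨hxM, hx⟩
    · exact Or.inr ⟨hnx, hx⟩

theorem iN_mono (hM : IsMaya M) : Monotone (iN M) := fun _ b hab =>
  Set.ncard_le_ncard (fun _ ⟨hxM, hx⟩ => ⟨hxM, hx.trans_le hab⟩) (hM.finite_notMem_lt b)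

theorem iN_add_one_of_mem {n : ℤ} (hn : n ∈ M) : iN M (n + 1) = iN M n := by
  unfold iN
  congr 1
  ext x
  simp only [Set.mem_ofPred_eq]
  constructor
  · rintro ⟨hxM, hx⟩
    exact ⟨hxM, lt_of_le_of_ne (Int.lt_add_one_iff.1 hx) (ne_of_mem_of_not_mem hn hxM).symm⟩
  · rintro ⟨hxM, hx⟩
    exact ⟨hxM, hx.trans (Int.lt_add_one_iff.2 le_rfl)⟩

theorem iN_add_one_le (hM : IsMaya M) (n : ℤ) : iN M (n + 1) ≤ iN M n + 1 := by
  have hsub : {x : ℤ | x ∉ M ∧ x < n + 1} ⊆ insert n {x : ℤ | x ∉ M ∧ x < n} := by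
    rintro x ⟨hxM, hx⟩
    rcases (Int.lt_add_one_iff.1 hx).lt_or_eq with hx | rfl
    · exact Or.inr ⟨hxM, hx⟩
    · exact Or.inl rfl
  exact (Set.ncard_le_ncard hsub ((hM.finite_notMem_lt n).insert n)).trans
    (Set.ncard_insert_le _ _)

variable {m : ℕ → ℤ}

theorem jN_eq_ncard (hm : StrictAnti m) (hrange : Set.range m = M) (n : ℤ) :
    jN M n = {t : ℕ | n ≤ m t}.ncard := by
  have himage : {x : ℤ | x ∈ M ∧ n ≤ x} = m '' {t : ℕ | n ≤ m t} := by
    subst hrange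
    ext x
    constructor
    · rintro ⟨⟨t, rfl⟩, hnt⟩
      exact ⟨t, hnt, rfl⟩
    · rintro ⟨t, hnt, rfl⟩
      exact ⟨⟨t, rfl⟩, hnt⟩
  rw [jN, himage, Set.ncard_image_of_injective _ hm.injective]

theorem lt_jN_iff (hM : IsMaya M) (hm : StrictAnti m) (hrange : Set.range m = M) {n : ℤ}
    {k : ℕ} : k < jN M n ↔ n ≤ m k := by
  rw [jN_eq_ncard hm hrange]
  constructor
  · intro hk
    by_contra! hlt
    have hsub : {t : ℕ | n ≤ m t} ⊆ Set.Iio k := fun t hnt =>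
      not_le.1 fun hkt => hlt.not_ge (hnt.trans (hm.antitone hkt))
    have := Set.ncard_le_ncard hsub (Set.finite_Iio k)
    rw [Set.ncard_Iio_nat] at this
    omega
  · intro hnk
    have hfin : {t : ℕ | n ≤ m t}.Finite := by
      refine ((hM.finite_mem_ge n).preimage hm.injective.injOn).subset fun t hnt => ?_
      exact ⟨hrange ▸ Set.mem_range_self t, hnt⟩
    have hsub : Set.Iic k ⊆ {t : ℕ | n ≤ m t} := fun t htk => hnk.trans (hm.antitone htk)
    have := Set.ncard_le_ncard hsub hfin
    rw [Set.ncard_Iic_nat] at this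
    omega

theorem jN_eq_add_one_iff (hM : IsMaya M) (hm : StrictAnti m) (hrange : Set.range m = M)
    {n : ℤ} {k : ℕ} : jN M n = k + 1 ↔ m (k + 1) < n ∧ n ≤ m k := by
  rw [← lt_jN_iff hM hm hrange, ← not_le, ← lt_jN_iff hM hm hrange]
  omega

theorem exists_iN_eq_and_jN_eq_add_one_iff (hM : IsMaya M) (hm : StrictAnti m)
    (hrange : Set.range m = M) {i k : ℕ} :
    (∃ n, iN M n = i ∧ jN M n = k + 1) ↔ iN M (m (k + 1)) ≤ i ∧ i ≤ iN M (m k) := by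
  simp only [jN_eq_add_one_iff hM hm hrange]
  have hbottom : iN M (m (k + 1) + 1) = iN M (m (k + 1)) :=
    iN_add_one_of_mem (hrange ▸ Set.mem_range_self _)
  constructor
  · rintro ⟨n, rfl, hlt, hle⟩
    exact ⟨hbottom ▸ iN_mono hM (Int.add_one_le_iff.2 hlt), iN_mono hM hle⟩
  · rintro ⟨hlo, hhi⟩
    obtain ⟨n, ⟨hlt, hle⟩, hn⟩ := Int.exists_mem_Icc_eq_of_le_add_one (iN_add_one_le hM)
      (Int.add_one_le_iff.2 (hm (Nat.lt_succ_self k))) (hbottom ▸ hlo) hhi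
    exact ⟨n, hn, Int.add_one_le_iff.1 hlt, hle⟩

end Maya

/-- `lam` and `m` are indexed from `0`: `lam (j - 1)` is the paper's `λ_j`. -/
theorem rim_eq_bent_diagram (M : Set ℤ) (hM : IsMaya M) (m : ℕ → ℤ)
    (hm : StrictAnti m) (hrange : Set.range m = M)
    (lam : ℕ → ℕ) (hlam : ∀ i : ℕ, lam i = {x : ℤ | x ∉ M ∧ x < m i}.ncard)
    (F : Set (ℕ × ℕ))
    (hF : F = {p : ℕ × ℕ | 1 ≤ p.1 ∧ 1 ≤ p.2 ∧ p.1 ≤ lam (p.2 - 1)}) :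
    {p ∈ F | (p.1 + 1, p.2 + 1) ∉ F} =
      {p : ℕ × ℕ | 1 ≤ p.1 ∧ 1 ≤ p.2 ∧ ∃ n : ℤ, iN M n = p.1 ∧ jN M n = p.2} := by
  have hlam_iN : ∀ t, lam t = iN M (m t) := hlam
  subst hF
  ext ⟨i, j⟩
  rcases j with _ | k
  · simp
  · simp only [Set.mem_ofPred_eq, Nat.add_sub_cancel,
      exists_iN_eq_and_jN_eq_add_one_iff hM hm hrange, hlam_iN]
    omega
end

section
/- Let M be a Maya diagram with Frobenius symbol (s₁,…,s_p | t₁,…,t_q). Then its Hermite pseudo-Wronskian H_M equals the determinant of the (p+q)×(p+q) matrix whose first p rows are (θ_{s_a}, θ_{s_a+1}, …, θ_{s_a+p+q−1}) for a = 1,…,p and whose last q rows are (H_{t_b}, H_{t_b}′, …, H_{t_b}^{(p+q−1)}) for b = q, q−1, …, 1 (row with index t_q first and row with index t₁ last). In particular, H_M is a polynomial. -/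
/-!
Differentiating `e^{c x²} P(x)` gives `e^{c x²} (2cxP + P')(x)`, so the Hermite functions are
produced by iterating the raising operator `P ↦ 2cXP + P'` on `1`: `H_n` with `c = -1` (up to
the sign `(-1)^n`) and `θ_n` with `c = 1`. In particular `(e^{x²} θ_n)' = e^{x²} θ_{n+1}`, so the
`k`-th derivative of `e^{x²} θ_{s_a}` is `e^{x²} θ_{s_a + k}`; pulling `e^{x²}` out of each of the
first `p` rows of the Wronskian cancels the prefactor `e^{-p x²}`. That `θ_n` is the iterate for
`c = 1` follows from the substitution `x ↦ i x`, which turns the operator for `c` into `-i` times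
the operator for `c i² = -c`.
-/

open Polynomial

namespace Polynomial

variable {R S : Type*} [CommRing R] [CommRing S]

noncomputable def gaussRaise (c : R) (P : R[X]) : R[X] := C (2 * c) * X * P + derivative P

theorem gaussRaise_C_mul (c b : R) (P : R[X]) :
    gaussRaise c (C b * P) = C b * gaussRaise c P := by
  simp only [gaussRaise, derivative_mul, derivative_C, zero_mul, zero_add]
  ring

theorem map_gaussRaise (f : R →+* S) (c : R) (P : R[X]) :
    (gaussRaise c P).map f = gaussRaise (f c) (P.map f) := by
  simp [gaussRaise, derivative_map, map_ofNat]

theorem map_iterate_gaussRaise (f : R →+* S) (c : R) (n : ℕ) (P : R[X]) :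
    ((gaussRaise c)^[n] P).map f = (gaussRaise (f c))^[n] (P.map f) := by
  induction n generalizing P with
  | zero => rfl
  | succ n ih =>
    rw [Function.iterate_succ_apply, Function.iterate_succ_apply, ih, map_gaussRaise]

theorem C_mul_gaussRaise_comp (a c : R) (P : R[X]) :
    C a * (gaussRaise c P).comp (C a * X) = gaussRaise (c * a ^ 2) (P.comp (C a * X)) := by
  simp only [gaussRaise, add_comp, mul_comp, C_comp, X_comp, derivative_comp, derivative_mul,
    derivative_C, derivative_X, map_mul, map_pow]
  ring

theorem C_pow_mul_iterate_gaussRaise_comp (a c : R) (n : ℕ) (P : R[X]) :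
    C (a ^ n) * ((gaussRaise c)^[n] P).comp (C a * X)
      = (gaussRaise (c * a ^ 2))^[n] (P.comp (C a * X)) := by
  induction n with
  | zero => simp
  | succ n ih =>
    rw [Function.iterate_succ_apply', Function.iterate_succ_apply', ← ih, gaussRaise_C_mul,
      ← C_mul_gaussRaise_comp, pow_succ', map_mul, mul_assoc, mul_left_comm]

end Polynomial

section Derivatives

variable {𝕜 : Type*} [NontriviallyNormedField 𝕜]

theorem Polynomial.iteratedDeriv_eval (P : 𝕜[X]) (k : ℕ) :
    iteratedDeriv k (fun y => P.eval y) = fun y => (derivative^[k] P).eval y := by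
  induction k generalizing P with
  | zero => rfl
  | succ k ih =>
    have hD : deriv (fun y => P.eval y) = fun y => P.derivative.eval y := by
      ext x
      exact (P.hasDerivAt x).deriv
    rw [iteratedDeriv_succ', hD, ih, Function.iterate_succ_apply]

theorem iteratedDeriv_dite_const {c : Prop} [Decidable c] (F : c → 𝕜 → 𝕜) (G : ¬c → 𝕜 → 𝕜)
    (k : ℕ) : iteratedDeriv k (fun y => if h : c then F h y else G h y)
      = if h : c then iteratedDeriv k (F h) else iteratedDeriv k (G h) := by
  split_ifs <;> rfl

theorem hasDerivAt_mul_eval_gaussRaise {g : 𝕜 → 𝕜} {c : 𝕜}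
    (hg : ∀ x, HasDerivAt g (2 * c * x * g x) x) (P : 𝕜[X]) (x : 𝕜) :
    HasDerivAt (fun y => g y * P.eval y) (g x * (gaussRaise c P).eval x) x := by
  refine ((hg x).fun_mul (P.hasDerivAt x)).congr_deriv ?_
  simp only [gaussRaise, eval_add, eval_mul, eval_C, eval_X]
  ring

theorem iteratedDeriv_mul_eval_gaussRaise {g : 𝕜 → 𝕜} {c : 𝕜}
    (hg : ∀ x, HasDerivAt g (2 * c * x * g x) x) (P : 𝕜[X]) (k : ℕ) :
    iteratedDeriv k (fun y => g y * P.eval y)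
      = fun y => g y * ((gaussRaise c)^[k] P).eval y := by
  induction k generalizing P with
  | zero => rfl
  | succ k ih =>
    rw [iteratedDeriv_succ', funext fun x => (hasDerivAt_mul_eval_gaussRaise hg P x).deriv, ih,
      Function.iterate_succ_apply]

end Derivatives

noncomputable def physHermitePoly (n : ℕ) : ℝ[X] := C ((-1) ^ n) * (gaussRaise (-1))^[n] 1

noncomputable def conjHermitePoly (n : ℕ) : ℝ[X] := (gaussRaise 1)^[n] 1

theorem physHermite_eq_eval (n : ℕ) : physHermite n = fun x => (physHermitePoly n).eval x := by
  have hg (x : ℝ) :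
      HasDerivAt (fun y => Real.exp (-y ^ 2)) (2 * -1 * x * Real.exp (-x ^ 2)) x := by
    simpa [mul_comm] using (hasDerivAt_pow 2 x).neg.exp
  have hD := iteratedDeriv_mul_eval_gaussRaise hg 1 n
  simp only [eval_one, mul_one] at hD
  ext x
  have hexp : Real.exp (x ^ 2) * Real.exp (-x ^ 2) = 1 := by rw [← Real.exp_add]; simp
  simp only [physHermite, hD, physHermitePoly, eval_mul, eval_C]
  linear_combination ((-1) ^ n * ((gaussRaise (-1))^[n] 1).eval x) * hexp

theorem hermiteC_eq_eval (n : ℕ) (z : ℂ) :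
    hermiteC n z = (-1) ^ n * ((gaussRaise (-1 : ℂ))^[n] 1).eval z := by
  have hg (x : ℂ) :
      HasDerivAt (fun y => Complex.exp (-y ^ 2)) (2 * -1 * x * Complex.exp (-x ^ 2)) x := by
    simpa [mul_comm] using (hasDerivAt_pow 2 x).neg.cexp
  have hD := iteratedDeriv_mul_eval_gaussRaise hg 1 n
  simp only [eval_one, mul_one] at hD
  have hexp : Complex.exp (z ^ 2) * Complex.exp (-z ^ 2) = 1 := by rw [← Complex.exp_add]; simp
  simp only [hermiteC, hD]
  linear_combination ((-1) ^ n * ((gaussRaise (-1 : ℂ))^[n] 1).eval z) * hexp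

theorem conjHermite_eq_eval (n : ℕ) (x : ℝ) : conjHermite n x = (conjHermitePoly n).eval x := by
  have hcomp : C (Complex.I ^ n) * ((gaussRaise (-1 : ℂ))^[n] 1).comp (C Complex.I * X)
      = (conjHermitePoly n).map (algebraMap ℝ ℂ) := by
    rw [C_pow_mul_iterate_gaussRaise_comp, conjHermitePoly, map_iterate_gaussRaise]
    simp
  have hI : Complex.I ^ (-(n : ℤ)) * (-1) ^ n = Complex.I ^ n := by
    rw [zpow_neg, zpow_natCast, ← Complex.I_sq, ← pow_mul, pow_mul', sq, ← mul_assoc,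
      inv_mul_cancel₀ (pow_ne_zero _ Complex.I_ne_zero), one_mul]
  have heval := congrArg (eval (algebraMap ℝ ℂ x)) hcomp
  rw [eval_map, eval₂_at_apply] at heval
  simp only [eval_mul, eval_C, eval_comp, eval_X, Complex.coe_algebraMap] at heval
  rw [conjHermite, hermiteC_eq_eval, ← mul_assoc, hI, heval, Complex.ofReal_re]

theorem iteratedDeriv_exp_sq_mul_conjHermite (k n : ℕ) (x : ℝ) :
    iteratedDeriv k (fun y => Real.exp (y ^ 2) * conjHermite n y) x
      = Real.exp (x ^ 2) * conjHermite (n + k) x := by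
  have hg (x : ℝ) : HasDerivAt (fun y => Real.exp (y ^ 2)) (2 * 1 * x * Real.exp (x ^ 2)) x := by
    simpa [mul_comm] using (hasDerivAt_pow 2 x).exp
  rw [add_comm n k]
  simp only [conjHermite_eq_eval, iteratedDeriv_mul_eval_gaussRaise hg, conjHermitePoly,
    Function.iterate_add_apply]

theorem Matrix.det_of_dite_lt_mul {R : Type*} [CommRing R] {p q : ℕ} (a : R)
    (f : ∀ i : Fin (p + q), (i : ℕ) < p → Fin (p + q) → R)
    (g : ∀ i : Fin (p + q), ¬(i : ℕ) < p → Fin (p + q) → R) :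
    (Matrix.of fun i k : Fin (p + q) => if h : (i : ℕ) < p then a * f i h k else g i h k).det
      = a ^ p *
        (Matrix.of fun i k : Fin (p + q) => if h : (i : ℕ) < p then f i h k else g i h k).det := by
  have hprod : ∏ i : Fin (p + q), (if (i : ℕ) < p then a else 1) = a ^ p := by
    simp [Fin.prod_univ_add]
  rw [← hprod, ← Matrix.det_mul_column]
  congr 1
  ext i k
  by_cases h : (i : ℕ) < p <;> simp [h]

theorem pW_eq_det {p q : ℕ} (s : Fin p → ℕ) (t : Fin q → ℕ) (x : ℝ) :
    pW p q s t x =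
      Matrix.det (Matrix.of fun i k : Fin (p + q) =>
        if h : (i : ℕ) < p then conjHermite (s ⟨i, h⟩ + (k : ℕ)) x
        else iteratedDeriv (k : ℕ)
          (physHermite (t ⟨p + q - 1 - (i : ℕ), by have := i.isLt; omega⟩)) x) := by
  simp only [pW, iteratedDeriv_dite_const, dite_apply, iteratedDeriv_exp_sq_mul_conjHermite]
  rw [Matrix.det_of_dite_lt_mul, ← mul_assoc, ← Real.exp_nat_mul, ← Real.exp_add]
  simp

/-- The Hermite pseudo-Wronskian of a Maya diagram with Frobenius symbol
`(s₁,…,s_p | t₁,…,t_q)` equals the `(p+q)×(p+q)` determinant whose first `p` rows are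
`(θ_{s_a}, θ_{s_a+1}, …, θ_{s_a+p+q−1})` and whose last `q` rows are the derivative rows
`(H_{t_b}, H_{t_b}′, …)` for `b = q, q−1, …, 1`.  In particular `H_M` is a polynomial. -/
theorem pseudoWronskian_alt_det {p q : ℕ}
    (s : Fin p → ℕ) (t : Fin q → ℕ) :
    (∀ x : ℝ, pW p q s t x =
      Matrix.det (Matrix.of fun i k : Fin (p + q) =>
        if h : (i : ℕ) < p then conjHermite (s ⟨i, h⟩ + (k : ℕ)) x
        else iteratedDeriv (k : ℕ)
          (physHermite (t ⟨p + q - 1 - (i : ℕ), by have := i.isLt; omega⟩)) x)) ∧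
    ∃ P : Polynomial ℝ, ∀ x : ℝ, pW p q s t x = P.eval x := by
  refine ⟨pW_eq_det s t, Matrix.det (Matrix.of fun i k : Fin (p + q) =>
    if h : (i : ℕ) < p then conjHermitePoly (s ⟨i, h⟩ + (k : ℕ))
    else derivative^[k] (physHermitePoly (t ⟨p + q - 1 - (i : ℕ), by have := i.isLt; omega⟩))),
    fun x => ?_⟩
  rw [pW_eq_det, ← coe_evalRingHom, RingHom.map_det]
  congr 1
  ext i k
  by_cases h : (i : ℕ) < p <;>
    simp [h, conjHermite_eq_eval, physHermite_eq_eval, Polynomial.iteratedDeriv_eval]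
end

section
/- Let M be a Maya diagram and suppose k ∈ ℤ is a minimal girth origin for M, i.e. |M − k| ≤ |M − j| for all j ∈ ℤ. Then necessarily k − 1 ∈ M and k ∉ M. -/
lemma finJset (M : Set ℤ) (hM : IsMaya M) (j : ℤ) : {m : ℤ | m ∈ M ∧ j ≤ m}.Finite := by
  apply (hM.1.union (Set.finite_Ico j 0)).subset
  rintro m ⟨hm, hjm⟩
  rcases le_or_gt 0 m with h | h
  · exact Or.inl ⟨hm, h⟩
  · exact Or.inr ⟨hjm, h⟩

lemma finIset (M : Set ℤ) (hM : IsMaya M) (j : ℤ) : {m : ℤ | m ∉ M ∧ m < j}.Finite := by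
  apply (hM.2.union (Set.finite_Ico 0 j)).subset
  rintro m ⟨hm, hmj⟩
  rcases le_or_gt 0 m with h | h
  · exact Or.inr ⟨h, hmj⟩
  · exact Or.inl ⟨h, hm⟩

lemma girth_shift (M : Set ℤ) (j : ℤ) :
    girth (shiftM M j) = {m : ℤ | m ∉ M ∧ m < j}.ncard + {m : ℤ | m ∈ M ∧ j ≤ m}.ncard := by
  have h1 : (fun a : ℕ => j - 1 - (a : ℤ)) '' MayaMinus (shiftM M j)
      = {m : ℤ | m ∉ M ∧ m < j} := by
    ext m
    constructor
    · rintro ⟨a, ha, rfl⟩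
      simp only [MayaMinus, shiftM, Set.mem_setOf_eq] at ha
      exact ⟨fun h => ha (by rwa [show -(a : ℤ) - 1 + j = j - 1 - a by ring]),
        show j - 1 - (a : ℤ) < j by omega⟩
    · rintro ⟨hm, hmj⟩
      refine ⟨(j - 1 - m).toNat, ?_, show j - 1 - (((j - 1 - m).toNat : ℕ) : ℤ) = m by omega⟩
      simp only [MayaMinus, shiftM, Set.mem_setOf_eq]
      intro h
      exact hm (by rwa [show -(((j - 1 - m).toNat : ℤ)) - 1 + j = m by omega] at h)
  have h2 : (fun a : ℕ => (a : ℤ) + j) '' MayaPlus (shiftM M j)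
      = {m : ℤ | m ∈ M ∧ j ≤ m} := by
    ext m
    constructor
    · rintro ⟨a, ha, rfl⟩
      exact ⟨ha, show j ≤ (a : ℤ) + j by omega⟩
    · rintro ⟨hm, hjm⟩
      refine ⟨(m - j).toNat, ?_, show (((m - j).toNat : ℕ) : ℤ) + j = m by omega⟩
      show ((m - j).toNat : ℤ) + j ∈ M
      rwa [show ((m - j).toNat : ℤ) + j = m by omega]
  rw [girth, ← h1, ← h2,
    Set.ncard_image_of_injective _ (fun a b h => by omega),
    Set.ncard_image_of_injective _ (fun a b h => by omega)]

/-- A minimal girth origin `k` of a Maya diagram `M` satisfies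
`k - 1 ∈ M` and `k ∉ M`. -/
theorem minimal_girth_origin_mem (M : Set ℤ) (hM : IsMaya M) (k : ℤ)
    (hk : ∀ j : ℤ, girth (shiftM M k) ≤ girth (shiftM M j)) :
    (k - 1) ∈ M ∧ k ∉ M := by
  constructor
  · by_contra hkm
    -- compare with shift by k - 1
    have hI : {m : ℤ | m ∉ M ∧ m < k} = insert (k - 1) {m : ℤ | m ∉ M ∧ m < k - 1} := by
      ext m
      simp only [Set.mem_setOf_eq, Set.mem_insert_iff]
      constructor
      · rintro ⟨h1, h2⟩
        rcases eq_or_ne m (k - 1) with rfl | hne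
        · exact Or.inl rfl
        · exact Or.inr ⟨h1, by omega⟩
      · rintro (rfl | ⟨h1, h2⟩)
        · exact ⟨hkm, by omega⟩
        · exact ⟨h1, by omega⟩
    have hJ : {m : ℤ | m ∈ M ∧ k - 1 ≤ m} = {m : ℤ | m ∈ M ∧ k ≤ m} := by
      ext m
      simp only [Set.mem_setOf_eq]
      constructor
      · rintro ⟨h1, h2⟩
        refine ⟨h1, ?_⟩
        have : m ≠ k - 1 := fun e => hkm (e ▸ h1)
        omega
      · rintro ⟨h1, h2⟩
        exact ⟨h1, by omega⟩
    have h := hk (k - 1)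
    rw [girth_shift, girth_shift, hI, hJ,
      Set.ncard_insert_of_notMem (by simp only [Set.mem_setOf_eq]; omega)
        (finIset M hM (k - 1))] at h
    omega
  · intro hkm
    have hI : {m : ℤ | m ∉ M ∧ m < k + 1} = {m : ℤ | m ∉ M ∧ m < k} := by
      ext m
      simp only [Set.mem_setOf_eq]
      constructor
      · rintro ⟨h1, h2⟩
        refine ⟨h1, ?_⟩
        have : m ≠ k := fun e => h1 (e ▸ hkm)
        omega
      · rintro ⟨h1, h2⟩
        exact ⟨h1, by omega⟩
    have hJ : {m : ℤ | m ∈ M ∧ k ≤ m} = insert k {m : ℤ | m ∈ M ∧ k + 1 ≤ m} := by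
      ext m
      simp only [Set.mem_setOf_eq, Set.mem_insert_iff]
      constructor
      · rintro ⟨h1, h2⟩
        rcases eq_or_ne m k with rfl | hne
        · exact Or.inl rfl
        · exact Or.inr ⟨h1, by omega⟩
      · rintro (rfl | ⟨h1, h2⟩)
        · exact ⟨hkm, le_refl _⟩
        · exact ⟨h1, by omega⟩
    have h := hk (k + 1)
    rw [girth_shift, girth_shift, hI, hJ,
      Set.ncard_insert_of_notMem (by simp only [Set.mem_setOf_eq]; omega)
        (finJset M hM (k + 1))] at h
    omega
end

section
/- Let M ⊆ ℤ be a Maya diagram with associated partition λ of length ℓ. Then the minimal girth of M equals min{λ_{j+1} + j : 0 ≤ j ≤ ℓ}, where λ_{ℓ+1} := 0. -/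
/-!
Shifting by `k` moves the origin to `k`, so `|M - k| = #{m ∉ M : m < k} + #{m ∈ M : m ≥ k}`.
Taking `k = m_{j+1} + 1` gives exactly `λ_{j+1} + j`. Conversely, for any `k` let
`j = #{m ∈ M : m ≥ k}`; then `m_{j+1} < k`, so the first count is at least `λ_{j+1}` when `j ≤ ℓ`,
while for `j > ℓ` the girth already exceeds `ℓ = λ_{ℓ+1} + ℓ`.
-/

lemma ncard_mayaMinus_shiftM (M : Set ℤ) (k : ℤ) :
    (MayaMinus (shiftM M k)).ncard = iN M k := by
  have himg : {x : ℤ | x ∉ M ∧ x < k} =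
      (fun a : ℕ => k - 1 - (a : ℤ)) '' MayaMinus (shiftM M k) := by
    ext x
    simp only [Set.mem_ofPred_eq, Set.mem_image, MayaMinus, shiftM]
    constructor
    · rintro ⟨hx, hxk⟩
      refine ⟨(k - 1 - x).toNat, ?_, by omega⟩
      rwa [Int.toNat_of_nonneg (by omega), show -(k - 1 - x) - 1 + k = x by ring]
    · rintro ⟨a, ha, rfl⟩
      exact ⟨by rwa [show k - 1 - (a : ℤ) = -(a : ℤ) - 1 + k by ring], by omega⟩
  rw [iN, himg, Set.ncard_image_of_injective _ (fun a b h => by omega)]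

lemma ncard_mayaPlus_shiftM (M : Set ℤ) (k : ℤ) :
    (MayaPlus (shiftM M k)).ncard = jN M k := by
  have himg : {x : ℤ | x ∈ M ∧ k ≤ x} = (fun a : ℕ => (a : ℤ) + k) '' MayaPlus (shiftM M k) := by
    ext x
    simp only [Set.mem_ofPred_eq, Set.mem_image, MayaPlus, shiftM]
    constructor
    · rintro ⟨hx, hxk⟩
      refine ⟨(x - k).toNat, ?_, by omega⟩
      rwa [Int.toNat_of_nonneg (by omega), sub_add_cancel]
    · rintro ⟨a, ha, rfl⟩
      exact ⟨ha, by omega⟩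
  rw [jN, himg, Set.ncard_image_of_injective _ (fun a b h => by omega)]

lemma girth_shiftM (M : Set ℤ) (k : ℤ) : girth (shiftM M k) = iN M k + jN M k := by
  rw [girth, ncard_mayaMinus_shiftM, ncard_mayaPlus_shiftM]

namespace IsMaya

variable {M : Set ℤ}

lemma finite_notMem_lt_s14 (hM : IsMaya M) (k : ℤ) : {x : ℤ | x ∉ M ∧ x < k}.Finite := by
  refine (hM.2.union (Set.finite_Ico 0 k)).subset fun x ⟨hx, hxk⟩ => ?_
  rcases lt_or_ge x 0 with h | h
  · exact Or.inl ⟨h, hx⟩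
  · exact Or.inr ⟨h, hxk⟩

lemma finite_mem_le (hM : IsMaya M) (k : ℤ) : {x : ℤ | x ∈ M ∧ k ≤ x}.Finite := by
  refine (hM.1.union (Set.finite_Ico k 0)).subset fun x ⟨hx, hxk⟩ => ?_
  rcases lt_or_ge x 0 with h | h
  · exact Or.inr ⟨hxk, h⟩
  · exact Or.inl ⟨hx, h⟩

lemma iN_mono (hM : IsMaya M) {k k' : ℤ} (h : k ≤ k') : iN M k ≤ iN M k' :=
  Set.ncard_le_ncard (fun _ hx => ⟨hx.1, hx.2.trans_le h⟩) (hM.finite_notMem_lt_s14 k')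

end IsMaya

section Enumeration

variable {M : Set ℤ} {m : ℕ → ℤ}

lemma jN_add_one_eq (hm : StrictAnti m) (hrange : Set.range m = M) (j : ℕ) :
    jN M (m j + 1) = j := by
  have hset : {x : ℤ | x ∈ M ∧ m j + 1 ≤ x} = m '' Set.Iio j := by
    ext x
    simp only [Set.mem_ofPred_eq, Set.mem_image, Set.mem_Iio, ← hrange, Set.mem_range]
    constructor
    · rintro ⟨⟨i, rfl⟩, hi⟩
      exact ⟨i, hm.lt_iff_gt.mp (by omega), rfl⟩
    · rintro ⟨i, hi, rfl⟩
      exact ⟨⟨i, rfl⟩, by have := hm hi; omega⟩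
  rw [jN, hset, Set.ncard_image_of_injective _ hm.injective, ← Finset.coe_range,
    Set.ncard_coe_finset, Finset.card_range]

lemma iN_add_one_eq (hrange : Set.range m = M) (j : ℕ) :
    iN M (m j + 1) = {x : ℤ | x ∉ M ∧ x < m j}.ncard := by
  have hmj : m j ∈ M := hrange ▸ Set.mem_range_self j
  rw [iN]
  congr 1
  ext x
  simp only [Set.mem_ofPred_eq]
  refine ⟨fun ⟨hx, hxk⟩ => ⟨hx, ?_⟩, fun ⟨hx, hxk⟩ => ⟨hx, by omega⟩⟩
  exact (Int.lt_add_one_iff.mp hxk).lt_of_ne fun h => hx (h ▸ hmj)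

lemma IsMaya.apply_jN_lt (hM : IsMaya M) (hm : StrictAnti m) (hrange : Set.range m = M) (k : ℤ) :
    m (jN M k) < k := by
  by_contra! h
  have hsub : m '' Set.Iic (jN M k) ⊆ {x : ℤ | x ∈ M ∧ k ≤ x} := by
    rintro x ⟨i, hi, rfl⟩
    exact ⟨hrange ▸ Set.mem_range_self i, h.trans (hm.antitone hi)⟩
  have := Set.ncard_le_ncard hsub (hM.finite_mem_le k)
  rw [Set.ncard_image_of_injective _ hm.injective, ← Finset.coe_Iic, Set.ncard_coe_finset,
    Nat.card_Iic, jN] at this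
  omega

end Enumeration

/-- Corollary `MGO`. The minimal girth of a Maya diagram equals
`min {λ_{j+1} + j : 0 ≤ j ≤ ℓ}`.  Here `lam` is the 0-based partition, so `lam j` is the
paper's `λ_{j+1}` (and `lam ℓ = 0`). -/
theorem minimal_girth_formula (M : Set ℤ) (hM : IsMaya M)
    (m : ℕ → ℤ) (hm : StrictAnti m) (hrange : Set.range m = M)
    (lam : ℕ → ℕ) (hlam : ∀ i : ℕ, lam i = {x : ℤ | x ∉ M ∧ x < m i}.ncard)
    (ℓ : ℕ) (hlen : ∀ i : ℕ, 0 < lam i ↔ i < ℓ) :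
    sInf {g : ℕ | ∃ k : ℤ, g = girth (shiftM M k)} =
      sInf {g : ℕ | ∃ j : ℕ, j ≤ ℓ ∧ g = lam j + j} := by
  have hlam_eq (j : ℕ) : lam j = iN M (m j + 1) := by rw [hlam, iN_add_one_eq hrange]
  apply le_antisymm
  · refine le_csInf ⟨lam 0 + 0, 0, ℓ.zero_le, rfl⟩ ?_
    rintro _ ⟨j, -, rfl⟩
    exact Nat.sInf_le ⟨m j + 1, by rw [girth_shiftM, jN_add_one_eq hm hrange, hlam_eq]⟩
  · refine le_csInf ⟨_, 0, rfl⟩ ?_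
    rintro _ ⟨k, rfl⟩
    rw [girth_shiftM]
    by_cases hj : jN M k ≤ ℓ
    · calc _ ≤ lam (jN M k) + jN M k := Nat.sInf_le (by exact ⟨jN M k, hj, rfl⟩)
        _ ≤ iN M k + jN M k := by
          rw [hlam_eq]
          exact Nat.add_le_add_right (hM.iN_mono (hM.apply_jN_lt hm hrange k)) _
    · have hlam_ℓ : lam ℓ = 0 := by have := hlen ℓ; omega
      calc _ ≤ lam ℓ + ℓ := Nat.sInf_le (by exact ⟨ℓ, le_rfl, rfl⟩)
        _ ≤ iN M k + jN M k := by omega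
end

section
/- For integers ℓ₁, ℓ₂ ≥ 1, let O(ℓ₁,ℓ₂) := {j ∈ ℤ : j < 0} ∪ {3j+1 : 0 ≤ j < ℓ₁} ∪ {3j+2 : 0 ≤ j < ℓ₂}, a Maya diagram. Then the minimal girth of O(ℓ₁,ℓ₂) equals max{ℓ₁, ℓ₂}, and it is attained at the shift k = 3·min{ℓ₁, ℓ₂}, i.e. |O(ℓ₁,ℓ₂) − 3·min{ℓ₁,ℓ₂}| = max{ℓ₁, ℓ₂} ≤ |O(ℓ₁,ℓ₂) − k| for all k ∈ ℤ. -/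
/-- The Okamoto Maya diagram `O(ℓ₁,ℓ₂)`. -/
def OkSet (l1 l2 : ℕ) : Set ℤ :=
  {j : ℤ | j < 0} ∪ {x : ℤ | ∃ j : ℕ, j < l1 ∧ x = 3 * (j : ℤ) + 1} ∪
    {x : ℤ | ∃ j : ℕ, j < l2 ∧ x = 3 * (j : ℤ) + 2}


lemma mem_okSet (l1 l2 : ℕ) (n : ℤ) :
    n ∈ OkSet l1 l2 ↔ n < 0 ∨ (0 ≤ n ∧ n % 3 = 1 ∧ n < 3 * l1) ∨
      (0 ≤ n ∧ n % 3 = 2 ∧ n < 3 * l2) := by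
  unfold OkSet
  simp only [Set.mem_union, Set.mem_setOf_eq]
  constructor
  · rintro ((h | ⟨j, hj, rfl⟩) | ⟨j, hj, rfl⟩)
    · left; exact h
    · right; left; omega
    · right; right; omega
  · rintro (h | ⟨h0, h1, h2⟩ | ⟨h0, h1, h2⟩)
    · left; left; exact h
    · left; right; exact ⟨((n - 1) / 3).toNat, by omega, by omega⟩
    · right; exact ⟨((n - 2) / 3).toNat, by omega, by omega⟩

lemma mayaMinus_shift_mem (l1 l2 : ℕ) (k : ℤ) (a : ℕ) :
    a ∈ MayaMinus (shiftM (OkSet l1 l2) k) ↔ (-(a : ℤ) - 1 + k) ∉ OkSet l1 l2 :=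
  Iff.rfl

lemma mayaPlus_shift_mem (l1 l2 : ℕ) (k : ℤ) (a : ℕ) :
    a ∈ MayaPlus (shiftM (OkSet l1 l2) k) ↔ ((a : ℤ) + k) ∈ OkSet l1 l2 :=
  Iff.rfl

lemma minus_finite (l1 l2 : ℕ) (k : ℤ) :
    (MayaMinus (shiftM (OkSet l1 l2) k)).Finite := by
  apply Set.Finite.subset (Set.finite_Iio k.natAbs)
  intro a ha
  rw [mayaMinus_shift_mem, mem_okSet] at ha
  simp only [Set.mem_Iio]
  omega

lemma plus_finite (l1 l2 : ℕ) (k : ℤ) :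
    (MayaPlus (shiftM (OkSet l1 l2) k)).Finite := by
  apply Set.Finite.subset (Set.finite_Iio (3 * l1 + 3 * l2 + k.natAbs))
  intro a ha
  rw [mayaPlus_shift_mem, mem_okSet] at ha
  simp only [Set.mem_Iio]
  omega

lemma girth_lower (l1 l2 L : ℕ) (r : ℤ) (hr : 1 ≤ r)
    (hmem : ∀ j : ℕ, j < L → (3 * (j : ℤ) + r) ∈ OkSet l1 l2) (k : ℤ) :
    L ≤ girth (shiftM (OkSet l1 l2) k) := by
  classical
  set S := shiftM (OkSet l1 l2) k with hS
  set J1 := (Finset.range L).filter (fun j : ℕ => k ≤ 3 * (j : ℤ) + r) with hJ1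
  set J2 := (Finset.range L).filter (fun j : ℕ => ¬ k ≤ 3 * (j : ℤ) + r) with hJ2
  have hsplit : J1.card + J2.card = L := by
    rw [hJ1, hJ2, Finset.card_filter_add_card_filter_not, Finset.card_range]
  have h1 : J1.card ≤ (MayaPlus S).ncard := by
    set f : ℕ → ℕ := fun j => (3 * (j : ℤ) + r - k).toNat with hf
    have hinj : Set.InjOn f ↑J1 := by
      intro a ha b hb hab
      simp only [hJ1, Finset.coe_filter, Set.mem_setOf_eq, Finset.mem_range] at ha hb
      simp only [hf] at hab
      omega
    have hsub : ↑(J1.image f) ⊆ MayaPlus S := by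
      intro a ha
      simp only [Finset.coe_image, Set.mem_image, Finset.mem_coe] at ha
      obtain ⟨j, hj, rfl⟩ := ha
      simp only [hJ1, Finset.mem_filter, Finset.mem_range] at hj
      rw [hS, mayaPlus_shift_mem]
      have heq : ((f j : ℤ)) + k = 3 * (j : ℤ) + r := by simp only [hf]; omega
      rw [heq]
      exact hmem j hj.1
    calc J1.card = (J1.image f).card := (Finset.card_image_of_injOn hinj).symm
      _ = (↑(J1.image f) : Set ℕ).ncard := (Set.ncard_coe_finset _).symm
      _ ≤ (MayaPlus S).ncard := Set.ncard_le_ncard hsub (plus_finite l1 l2 k)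
  have h2 : J2.card ≤ (MayaMinus S).ncard := by
    set f : ℕ → ℕ := fun j => (k - 1 - 3 * (j : ℤ)).toNat with hf
    have hinj : Set.InjOn f ↑J2 := by
      intro a ha b hb hab
      simp only [hJ2, Finset.coe_filter, Set.mem_setOf_eq, Finset.mem_range] at ha hb
      simp only [hf] at hab
      omega
    have hsub : ↑(J2.image f) ⊆ MayaMinus S := by
      intro a ha
      simp only [Finset.coe_image, Set.mem_image, Finset.mem_coe] at ha
      obtain ⟨j, hj, rfl⟩ := ha
      simp only [hJ2, Finset.mem_filter, Finset.mem_range] at hj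
      rw [hS, mayaMinus_shift_mem, mem_okSet]
      have heq : -((f j : ℤ)) - 1 + k = 3 * (j : ℤ) := by simp only [hf]; omega
      rw [heq]
      omega
    calc J2.card = (J2.image f).card := (Finset.card_image_of_injOn hinj).symm
      _ = (↑(J2.image f) : Set ℕ).ncard := (Set.ncard_coe_finset _).symm
      _ ≤ (MayaMinus S).ncard := Set.ncard_le_ncard hsub (minus_finite l1 l2 k)
  unfold girth
  omega


/-- from Proposition `O`. For `ℓ₁, ℓ₂ ≥ 1`, the minimal girth of the
Okamoto Maya diagram `O(ℓ₁,ℓ₂)` equals `max {ℓ₁, ℓ₂}`, attained at the shift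
`k = 3 · min {ℓ₁, ℓ₂}`. -/
theorem okamoto_minimal_girth (l1 l2 : ℕ) (h1 : 1 ≤ l1) (h2 : 1 ≤ l2) :
    girth (shiftM (OkSet l1 l2) (3 * (min l1 l2 : ℤ))) = max l1 l2 ∧
    ∀ k : ℤ, max l1 l2 ≤ girth (shiftM (OkSet l1 l2) k) := by
  constructor
  · rcases le_total l1 l2 with hle | hle
    · rw [min_eq_left (by exact_mod_cast hle : (l1:ℤ) ≤ (l2:ℤ)), max_eq_right hle]
      have hA : MayaMinus (shiftM (OkSet l1 l2) (3 * (l1 : ℤ))) =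
          ↑((Finset.range l1).image (fun j => 3 * j + 2)) := by
        ext a
        rw [mayaMinus_shift_mem, mem_okSet]
        simp only [Finset.coe_image, Set.mem_image, Finset.mem_coe, Finset.mem_range]
        constructor
        · intro h; exact ⟨a / 3, by omega, by omega⟩
        · rintro ⟨j, hj, rfl⟩; omega
      have hB : MayaPlus (shiftM (OkSet l1 l2) (3 * (l1 : ℤ))) =
          ↑((Finset.range (l2 - l1)).image (fun j => 3 * j + 2)) := by
        ext a
        rw [mayaPlus_shift_mem, mem_okSet]
        simp only [Finset.coe_image, Set.mem_image, Finset.mem_coe, Finset.mem_range]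
        constructor
        · intro h; exact ⟨a / 3, by omega, by omega⟩
        · rintro ⟨j, hj, rfl⟩; omega
      unfold girth
      rw [hA, hB, Set.ncard_coe_finset, Set.ncard_coe_finset,
        Finset.card_image_of_injective _ (fun a b h => by omega),
        Finset.card_image_of_injective _ (fun a b h => by omega),
        Finset.card_range, Finset.card_range]
      omega
    · rw [min_eq_right (by exact_mod_cast hle : (l2:ℤ) ≤ (l1:ℤ)), max_eq_left hle]
      have hA : MayaMinus (shiftM (OkSet l1 l2) (3 * (l2 : ℤ))) =
          ↑((Finset.range l2).image (fun j => 3 * j + 2)) := by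
        ext a
        rw [mayaMinus_shift_mem, mem_okSet]
        simp only [Finset.coe_image, Set.mem_image, Finset.mem_coe, Finset.mem_range]
        constructor
        · intro h; exact ⟨a / 3, by omega, by omega⟩
        · rintro ⟨j, hj, rfl⟩; omega
      have hB : MayaPlus (shiftM (OkSet l1 l2) (3 * (l2 : ℤ))) =
          ↑((Finset.range (l1 - l2)).image (fun j => 3 * j + 1)) := by
        ext a
        rw [mayaPlus_shift_mem, mem_okSet]
        simp only [Finset.coe_image, Set.mem_image, Finset.mem_coe, Finset.mem_range]
        constructor
        · intro h; exact ⟨a / 3, by omega, by omega⟩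
        · rintro ⟨j, hj, rfl⟩; omega
      unfold girth
      rw [hA, hB, Set.ncard_coe_finset, Set.ncard_coe_finset,
        Finset.card_image_of_injective _ (fun a b h => by omega),
        Finset.card_image_of_injective _ (fun a b h => by omega),
        Finset.card_range, Finset.card_range]
      omega
  · intro k
    apply max_le
    · exact girth_lower l1 l2 l1 1 le_rfl
        (fun j hj => by rw [mem_okSet]; right; left; omega) k
    · exact girth_lower l1 l2 l2 2 (by norm_num)
        (fun j hj => by rw [mem_okSet]; right; right; omega) k
end
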